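/- Fix d ≥ 1, ν > 0, ε > 0, γ ∈ ℝ and a time step δt > 0. Let Cₙ be a symmetric positive semi-definite real d×d matrix, let g ∈ ℝ^d, and suppose the symmetric matrix X satisfies the backward Euler equation (1 + δt·ν(‖X‖_F² + ε)^{(γ-2)/2}) • X = Cₙ + δt • (g⊗g), where g⊗g is the rank-one matrix with entries g_i g_j. Then X is positive semi-definite. -/

import Mathlib

open Matrix

/-- The squared Frobenius norm of a real matrix. -/
def frobSq {d : ℕ} (A : Matrix (Fin d) (Fin d) ℝ) : ℝ :=
  ∑ i, ∑ j, (A i j) ^ 2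

theorem frobSq_nonneg {d : ℕ} (A : Matrix (Fin d) (Fin d) ℝ) : 0 ≤ frobSq A := by
  unfold frobSq
  positivity

theorem Matrix.posSemidef_smul_iff {n R : Type*} [Field R] [LinearOrder R]
    [IsOrderedRing R] [StarRing R] [StarOrderedRing R] [TrivialStar R]
    {A : Matrix n n R} {c : R} (hc : 0 < c) : (c • A).PosSemidef ↔ A.PosSemidef := by
  refine ⟨fun h => ?_, fun h => h.smul hc.le⟩
  simpa [smul_smul, inv_mul_cancel₀ hc.ne'] using h.smul (inv_nonneg.mpr hc.le)

theorem Matrix.posSemidef_vecMulVec_self {n R : Type*} [Finite n] [CommRing R] [PartialOrder R]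
    [StarRing R] [StarOrderedRing R] [TrivialStar R] (g : n → R) :
    (vecMulVec g g).PosSemidef := by
  simpa using posSemidef_vecMulVec_self_star g

theorem backwardEuler_posSemidef_general
    (d : ℕ) (ν ε γ δt : ℝ) (hν : 0 < ν) (hε : 0 < ε) (hδt : 0 < δt)
    (Cn X : Matrix (Fin d) (Fin d) ℝ) (g : Fin d → ℝ)
    (hCn : Cn.PosSemidef)
    (heq : (1 + δt * (ν * (frobSq X + ε) ^ ((γ - 2) / 2))) • X
            = Cn + δt • Matrix.vecMulVec g g) :
    X.PosSemidef := by
  have hfactor : 0 < 1 + δt * (ν * (frobSq X + ε) ^ ((γ - 2) / 2)) := by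
    have := frobSq_nonneg X
    positivity
  rw [← posSemidef_smul_iff hfactor, heq]
  exact hCn.add ((posSemidef_vecMulVec_self g).smul hδt.le)

/-- Backward Euler preserves positive semi-definiteness:
if `(1 + δt ν (‖X‖_F² + ε)^((γ-2)/2)) • X = Cₙ + δt • (g ⊗ g)` with
`Cₙ` symmetric PSD and `X` symmetric, then `X` is PSD. -/
theorem backwardEuler_posSemidef
    (d : ℕ) (hd : 1 ≤ d) (ν ε γ δt : ℝ) (hν : 0 < ν) (hε : 0 < ε) (hδt : 0 < δt)
    (Cn X : Matrix (Fin d) (Fin d) ℝ) (g : Fin d → ℝ)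
    (hCn : Cn.PosSemidef) (hX : X.IsSymm)
    (heq : (1 + δt * (ν * (frobSq X + ε) ^ ((γ - 2) / 2))) • X
            = Cn + δt • Matrix.vecMulVec g g) :
    X.PosSemidef :=
  backwardEuler_posSemidef_general d ν ε γ δt hν hε hδt Cn X g hCn heq
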